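/- Let G be a digraph with a global sink, and let σ₁ and σ₂ be recurrent chip configurations on G. If there is an acyclic rotor configuration ρ on G such that σ₁(ρ) = σ₂(ρ), then σ₁ = σ₂. -/

import Mathlib

/-!
Freeness of the sandpile action on acyclic rotor configurations (Holroyd et al.,
Lemma 3.18): if σ₁ and σ₂ are recurrent chip configurations and σ₁(ρ) = σ₂(ρ) for
some acyclic rotor configuration ρ, then σ₁ = σ₂.
-/

/-- The out-degree of a vertex. -/
def outdeg {V E : Type} [Fintype E] [DecidableEq V] (tail : E → V) (v : V) : ℕ :=
  (Finset.univ.filter (fun e => tail e = v)).card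

/-- The number of edges from `v` to `w`. -/
def numEdges {V E : Type} [Fintype E] [DecidableEq V] (tail head : E → V) (v w : V) : ℕ :=
  (Finset.univ.filter (fun e => tail e = v ∧ head e = w)).card

/-- The vertices other than the (global) sink `s`. -/
abbrev Vne {V : Type} (s : V) : Type := {v : V // v ≠ s}

/-- Firing the vertex `v`. -/
def fire {V E : Type} [Fintype E] [DecidableEq V] {s : V} (tail head : E → V)
    (σ : Vne s → ℕ) (v : Vne s) : Vne s → ℕ :=
  fun w =>
    if w = v then σ v + numEdges tail head v.1 v.1 - outdeg tail v.1
    else σ w + numEdges tail head v.1 w.1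

/-- A (non-sink) vertex is active when it has at least as many chips as outgoing edges. -/
def Active {V E : Type} [Fintype E] [DecidableEq V] {s : V} (tail : E → V)
    (σ : Vne s → ℕ) (v : Vne s) : Prop :=
  outdeg tail v.1 ≤ σ v

/-- The result of firing the vertices in the list `l` in order, starting from `σ`. -/
def fireList {V E : Type} [Fintype E] [DecidableEq V] {s : V} (tail head : E → V)
    (σ : Vne s → ℕ) : List (Vne s) → (Vne s → ℕ)
  | [] => σ
  | v :: l => fireList tail head (fire tail head σ v) l

/-- The firing sequence `l` is legal from `σ`. -/
def Legal {V E : Type} [Fintype E] [DecidableEq V] {s : V} (tail head : E → V)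
    (σ : Vne s → ℕ) : List (Vne s) → Prop
  | [] => True
  | v :: l => Active tail σ v ∧ Legal tail head (fire tail head σ v) l

/-- A configuration is stable when no non-sink vertex is active. -/
def Stable {V E : Type} [Fintype E] [DecidableEq V] {s : V} (tail : E → V)
    (σ : Vne s → ℕ) : Prop :=
  ∀ v, σ v < outdeg tail v.1

/-- `σ` is accessible: from any chip configuration `ζ` one can obtain `σ` by adding
some chips and then performing a legal sequence of firings of active vertices. -/
def Accessible {V E : Type} [Fintype E] [DecidableEq V] {s : V} (tail head : E → V)
    (σ : Vne s → ℕ) : Prop :=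
  ∀ ζ : Vne s → ℕ, ∃ (β : Vne s → ℕ) (l : List (Vne s)),
    Legal tail head (fun v => ζ v + β v) l ∧ fireList tail head (fun v => ζ v + β v) l = σ

/-- A chip configuration is recurrent when it is both stable and accessible. -/
def Recurrent {V E : Type} [Fintype E] [DecidableEq V] {s : V} (tail head : E → V)
    (σ : Vne s → ℕ) : Prop :=
  Stable tail σ ∧ Accessible tail head σ

/-- Rotor configurations on the non-sink vertices. -/
abbrev RotorConfig {V E : Type} (tail : E → V) (s : V) : Type :=
  {ρ : Vne s → E // ∀ v, tail (ρ v) = v.1}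

/-- A chip-and-rotor state. -/
abbrev CRState {V E : Type} (tail : E → V) (s : V) : Type :=
  (Vne s → ℕ) × RotorConfig tail s

/-- Firing the non-sink vertex `v` in a chip-and-rotor state: the rotor at `v` advances
to the next edge and one chip moves from `v` along it (disappearing at the sink). -/
def crFire {V E : Type} [DecidableEq V] {s : V} (tail head : E → V) (next : E → E)
    (hnext : ∀ e, tail (next e) = tail e)
    (τ : CRState tail s) (v : Vne s) : CRState tail s :=
  (fun u => (τ.1 u - if u = v then 1 else 0) +
      if u.1 = head (next (τ.2.1 v)) then 1 else 0,
   ⟨Function.update τ.2.1 v (next (τ.2.1 v)), by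
      intro u
      rcases eq_or_ne u v with h | h
      · rw [h, Function.update_self, hnext]
        exact τ.2.2 v
      · rw [Function.update_of_ne h]
        exact τ.2.2 u⟩)

/-- A non-sink vertex is active when it holds a chip. -/
def crActive {V E : Type} {s : V} (tail : E → V) (τ : CRState tail s) (v : Vne s) : Prop :=
  1 ≤ τ.1 v

/-- The result of firing the vertices in the list `l` in order. -/
def crFireList {V E : Type} [DecidableEq V] {s : V} (tail head : E → V) (next : E → E)
    (hnext : ∀ e, tail (next e) = tail e)
    (τ : CRState tail s) : List (Vne s) → CRState tail s
  | [] => τ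
  | v :: l => crFireList tail head next hnext (crFire tail head next hnext τ v) l

/-- The firing sequence `l` is legal from `τ`. -/
def crLegal {V E : Type} [DecidableEq V] {s : V} (tail head : E → V) (next : E → E)
    (hnext : ∀ e, tail (next e) = tail e)
    (τ : CRState tail s) : List (Vne s) → Prop
  | [] => True
  | v :: l => crActive tail τ v ∧ crLegal tail head next hnext (crFire tail head next hnext τ v) l

/-- `σ(ρ) = ρ'`: starting with chips `σ` and rotors `ρ`, all chips can be routed to
the sink by a legal firing sequence, leaving the rotor configuration `ρ'`. -/
def RoutesAll {V E : Type} [DecidableEq V] {s : V} (tail head : E → V) (next : E → E)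
    (hnext : ∀ e, tail (next e) = tail e)
    (σ : Vne s → ℕ) (ρ ρ' : RotorConfig tail s) : Prop :=
  ∃ l : List (Vne s), crLegal tail head next hnext (σ, ρ) l ∧
    (∀ v, (crFireList tail head next hnext (σ, ρ) l).1 v = 0) ∧
    (crFireList tail head next hnext (σ, ρ) l).2 = ρ'

/-- The vertex-successor map of a rotor configuration (fixing the sink). -/
def rotorSucc {V E : Type} [DecidableEq V] (tail head : E → V) (s : V)
    (ρ : RotorConfig tail s) : V → V :=
  fun u => if h : u = s then u else head (ρ.1 ⟨u, h⟩)

/-- A rotor configuration is acyclic when its edges contain no directed cycle. -/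
def RAcyclic {V E : Type} [DecidableEq V] (tail head : E → V) (s : V)
    (ρ : RotorConfig tail s) : Prop :=
  ∀ (v : Vne s) (k : ℕ), 0 < k → (rotorSucc tail head s ρ)^[k] v.1 ≠ v.1

/-!
Let every vertex `v` fire `n v` times in a rotor-routing run. The rotor at `v` runs through a
cyclic order of its `d_v` outgoing edges, so each block of `d_v` firings of `v` returns the rotor
to where it started and sends one chip along every outgoing edge. Hence the configuration emptied
by these firings is `(n / d) ᵥ* Δ` plus a term that depends only on the residues `n % d`, and the
residues are determined by the final rotors. So `σ₁(ρ) = σ₂(ρ)` gives `σ₂ = σ₁ - c ᵥ* Δ` for an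
integer vector `c`.

Recurrent configurations are distinct modulo the Laplacian lattice: by accessibility `σ₁` is
reached from a configuration with `k d_v` chips on every `v`, which forces every vertex to fire at
least `k` times, and the least action principle applied towards the stable `σ₂` then gives
`c ≥ 0`. By symmetry also `c ≤ 0`.
-/

open Finset Matrix Function

section FiringVector

variable {α : Type} [DecidableEq α]

def firingVector (l : List α) : α → ℤ :=
  fun v => l.count v

@[simp]
lemma firingVector_nil : firingVector ([] : List α) = 0 := by
  ext; simp [firingVector]

lemma firingVector_cons (u : α) (l : List α) :
    firingVector (u :: l) = firingVector l + Pi.single u 1 := by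
  ext v
  rw [firingVector, List.count_cons, Pi.add_apply, Pi.single_apply, firingVector]
  split_ifs <;> simp_all

lemma firingVector_nonneg (l : List α) : 0 ≤ firingVector l :=
  fun _ => Nat.cast_nonneg _

end FiringVector

section ChipFiring

variable {V E : Type} [Fintype V] [DecidableEq V] [Fintype E] {s : V} (tail head : E → V)

/-- The reduced Laplacian `Δ v w = d_v δ_vw - a_vw`: firing each vertex `n v` times subtracts
`n ᵥ* Δ` from the configuration. -/
def laplacian : Matrix (Vne s) (Vne s) ℤ :=
  fun v w => (if v = w then (outdeg tail v.1 : ℤ) else 0) - numEdges tail head v.1 w.1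

variable {tail head}

lemma vecMul_laplacian_apply (n : Vne s → ℤ) (v : Vne s) :
    (n ᵥ* laplacian tail head) v =
      n v * outdeg tail v.1 - ∑ w, n w * numEdges tail head w.1 v.1 := by
  simp [vecMul, dotProduct, laplacian, mul_sub, sum_sub_distrib, mul_ite]

lemma vecMul_laplacian_le {n : Vne s → ℤ} (hn : 0 ≤ n) (v : Vne s) :
    (n ᵥ* laplacian tail head) v ≤ n v * outdeg tail v.1 := by
  rw [vecMul_laplacian_apply, sub_le_self_iff]
  exact sum_nonneg fun w _ => mul_nonneg (hn w) (Nat.cast_nonneg _)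

lemma fire_cast {σ : Vne s → ℕ} {u : Vne s} (hu : Active tail σ u) (v : Vne s) :
    (fire tail head σ u v : ℤ) = σ v - (Pi.single u 1 ᵥ* laplacian tail head) v := by
  have hu : outdeg tail u.1 ≤ σ u := hu
  rw [single_one_vecMul, row_apply, fire, laplacian]
  rcases eq_or_ne v u with rfl | h
  · simp only [if_true]; omega
  · simp [h, h.symm]

lemma fireList_cast {σ : Vne s → ℕ} {l : List (Vne s)} (hl : Legal tail head σ l)
    (v : Vne s) :
    (fireList tail head σ l v : ℤ) = σ v - (firingVector l ᵥ* laplacian tail head) v := by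
  induction l generalizing σ with
  | nil => simp [fireList]
  | cons u l ih =>
    obtain ⟨hu, hl⟩ := hl
    rw [fireList, ih hl, fire_cast hu, firingVector_cons, add_vecMul, Pi.add_apply]
    ring

/-- The least action principle. -/
lemma firingVector_le_of_legal {σ T : Vne s → ℕ} (hT : Stable tail T) {l : List (Vne s)}
    (hl : Legal tail head σ l) {f : Vne s → ℤ} (hf : 0 ≤ f)
    (hσT : ∀ v, (T v : ℤ) = σ v - (f ᵥ* laplacian tail head) v) :
    firingVector l ≤ f := by
  induction l generalizing σ f with
  | nil => simpa using hf
  | cons u l ih =>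
    obtain ⟨hu, hl⟩ := hl
    have hfu : 1 ≤ f u := by
      by_contra! h
      have hle := vecMul_laplacian_le (tail := tail) (head := head) hf u
      have hu : outdeg tail u.1 ≤ σ u := hu
      have hfu0 : f u = 0 := le_antisymm (by omega) (hf u)
      rw [hfu0, zero_mul] at hle
      have := hT u
      have := hσT u
      omega
    have hf' : 0 ≤ f - Pi.single u 1 := fun w => by
      rcases eq_or_ne w u with rfl | h
      · simpa using hfu
      · simpa [h] using hf w
    have hl' := ih hl hf' fun w => by rw [fire_cast hu, sub_vecMul, Pi.sub_apply, hσT]; ring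
    calc firingVector (u :: l) = firingVector l + Pi.single u 1 := firingVector_cons u l
      _ ≤ f - Pi.single u 1 + Pi.single u 1 := add_le_add_left hl' _
      _ = f := sub_add_cancel f _

lemma le_firingVector_of_stable {χ : Vne s → ℕ} {l : List (Vne s)} (hl : Legal tail head χ l)
    (hst : Stable tail (fireList tail head χ l)) {k : ℕ} {v : Vne s}
    (hv : k * outdeg tail v.1 ≤ χ v) : k ≤ firingVector l v := by
  have hfin := fireList_cast hl v
  have hle := vecMul_laplacian_le (tail := tail) (head := head) (firingVector_nonneg l) v
  have hst := hst v
  have : (k : ℤ) * outdeg tail v.1 < (firingVector l v + 1) * outdeg tail v.1 := by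
    zify at hv; linarith
  exact Int.lt_add_one_iff.mp (lt_of_mul_lt_mul_right this (Nat.cast_nonneg _))

lemma nonneg_of_recurrent_of_stable {σ₁ σ₂ : Vne s → ℕ} (h₁ : Recurrent tail head σ₁)
    (h₂ : Stable tail σ₂) {c : Vne s → ℤ}
    (hc : ∀ v, (σ₂ v : ℤ) = σ₁ v - (c ᵥ* laplacian tail head) v) : 0 ≤ c := by
  obtain ⟨k, hk⟩ : ∃ k : ℕ, ∀ v, -c v ≤ k := by
    obtain ⟨M, hM⟩ := Finite.exists_le fun v => -c v
    exact ⟨M.toNat, fun v => (hM v).trans (Int.self_le_toNat M)⟩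
  obtain ⟨β, l, hl, hfin⟩ := h₁.2 fun v => k * outdeg tail v.1
  have hcount v : k ≤ firingVector l v :=
    le_firingVector_of_stable hl (hfin ▸ h₁.1) (Nat.le_add_right _ _)
  have hσ₁ v := hfin ▸ fireList_cast hl v
  have := firingVector_le_of_legal h₂ hl (f := firingVector l + c)
    (fun v => by have := hk v; have := hcount v; simp only [Pi.zero_apply, Pi.add_apply]; omega)
    (fun v => by rw [hc, hσ₁, add_vecMul, Pi.add_apply]; ring)
  exact fun v => by simpa using this v

lemma eq_of_recurrent_of_vecMul_laplacian {σ₁ σ₂ : Vne s → ℕ}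
    (h₁ : Recurrent tail head σ₁) (h₂ : Recurrent tail head σ₂) {c : Vne s → ℤ}
    (hc : ∀ v, (σ₂ v : ℤ) = σ₁ v - (c ᵥ* laplacian tail head) v) : σ₁ = σ₂ := by
  have hpos := nonneg_of_recurrent_of_stable h₁ h₂.1 hc
  have hneg := nonneg_of_recurrent_of_stable h₂ h₁.1 (c := -c)
    fun v => by rw [neg_vecMul, Pi.neg_apply, hc]; ring
  have hc0 : c = 0 := le_antisymm (fun v => by simpa using hneg v) hpos
  funext v
  simpa [hc0] using (hc v).symm

end ChipFiring

section RotorPeriod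

variable {V E : Type} {tail : E → V} {next : E → E}

lemma tail_iterate (hnext : ∀ e, tail (next e) = tail e) (k : ℕ) (e : E) :
    tail (next^[k] e) = tail e := by
  induction k with
  | zero => rfl
  | succ k ih => rw [iterate_succ_apply', hnext, ih]

lemma mem_periodicPts_of_forall_exists_iterate_eq (hnext : ∀ e, tail (next e) = tail e)
    (hcyc : ∀ e e' : E, tail e = tail e' → ∃ k, next^[k] e = e') (e : E) :
    e ∈ periodicPts next := by
  obtain ⟨k, hk⟩ := hcyc (next e) e (hnext e)
  exact mk_mem_periodicPts k.succ_pos hk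

variable [DecidableEq V] [Fintype E]

lemma card_filter_range_minimalPeriod (hnext : ∀ e, tail (next e) = tail e)
    (hcyc : ∀ e e' : E, tail e = tail e' → ∃ k, next^[k] e = e')
    (P : E → Prop) [DecidablePred P] (e : E) :
    #{j ∈ range (minimalPeriod next e) | P (next^[j] e)} = #{f | tail f = tail e ∧ P f} := by
  refine card_nbij (fun j => next^[j] e) (fun j hj => ?_) (fun i hi j hj hij => ?_)
    fun f hf => ?_
  · rw [mem_coe, mem_filter] at hj ⊢
    exact ⟨mem_univ _, tail_iterate hnext j e, hj.2⟩
  · rw [mem_coe, mem_filter, mem_range] at hi hj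
    exact iterate_injOn_Iio_minimalPeriod hi.1 hj.1 hij
  · rw [mem_coe, mem_filter] at hf
    obtain ⟨-, hft, hfP⟩ := hf
    obtain ⟨k, rfl⟩ := hcyc e f hft.symm
    have hpos := minimalPeriod_pos_of_mem_periodicPts
      (mem_periodicPts_of_forall_exists_iterate_eq hnext hcyc e)
    refine ⟨k % minimalPeriod next e, ?_, iterate_mod_minimalPeriod_eq⟩
    simpa [iterate_mod_minimalPeriod_eq, hfP] using Nat.mod_lt k hpos

lemma minimalPeriod_eq_outdeg (hnext : ∀ e, tail (next e) = tail e)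
    (hcyc : ∀ e e' : E, tail e = tail e' → ∃ k, next^[k] e = e') (e : E) :
    minimalPeriod next e = outdeg tail (tail e) := by
  simpa [outdeg] using card_filter_range_minimalPeriod hnext hcyc (fun _ => True) e

lemma mod_outdeg_eq_of_iterate_eq (hnext : ∀ e, tail (next e) = tail e)
    (hcyc : ∀ e e' : E, tail e = tail e' → ∃ k, next^[k] e = e') {e : E} {a b : ℕ}
    (h : next^[a] e = next^[b] e) : a % outdeg tail (tail e) = b % outdeg tail (tail e) := by
  have hpos := minimalPeriod_pos_of_mem_periodicPts
    (mem_periodicPts_of_forall_exists_iterate_eq hnext hcyc e)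
  rw [← iterate_mod_minimalPeriod_eq, ← iterate_mod_minimalPeriod_eq (n := b),
    iterate_eq_iterate_iff_of_lt_minimalPeriod (Nat.mod_lt a hpos) (Nat.mod_lt b hpos)] at h
  rwa [← minimalPeriod_eq_outdeg hnext hcyc]

end RotorPeriod

section RotorSent

variable {V E : Type} [DecidableEq V] (head : E → V) (next : E → E)

/-- The number of chips sent to `x` by `n` firings of a vertex whose rotor points at `e`. -/
def rotorSent (e : E) (x : V) (n : ℕ) : ℕ :=
  Nat.count (fun j => head (next^[j + 1] e) = x) n

variable {head next}

lemma rotorSent_succ (e : E) (x : V) (n : ℕ) :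
    rotorSent head next e x (n + 1) =
      rotorSent head next (next e) x n + if head (next e) = x then 1 else 0 :=
  Nat.count_succ' _ n

lemma rotorSent_add (e : E) (x : V) (m n : ℕ) :
    rotorSent head next e x (m + n) =
      rotorSent head next e x m + rotorSent head next (next^[m] e) x n := by
  rw [rotorSent, Nat.count_add]
  congr 2
  funext k
  rw [← iterate_add_apply]
  congr 3
  omega

variable [Fintype E] {tail : E → V}

lemma rotorSent_outdeg (hnext : ∀ e, tail (next e) = tail e)
    (hcyc : ∀ e e' : E, tail e = tail e' → ∃ k, next^[k] e = e') (e : E) (x : V) :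
    rotorSent head next e x (outdeg tail (tail e)) = numEdges tail head (tail e) x := by
  have := card_filter_range_minimalPeriod hnext hcyc (fun f => head f = x) (next e)
  rw [minimalPeriod_eq_outdeg hnext hcyc, hnext] at this
  rw [rotorSent, Nat.count_eq_card_filter_range]
  exact this

lemma rotorSent_outdeg_mul (hnext : ∀ e, tail (next e) = tail e)
    (hcyc : ∀ e e' : E, tail e = tail e' → ∃ k, next^[k] e = e') (e : E) (x : V) (q : ℕ) :
    rotorSent head next e x (outdeg tail (tail e) * q) = q * numEdges tail head (tail e) x := by
  have hperiod : next^[outdeg tail (tail e)] e = e := by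
    rw [← minimalPeriod_eq_outdeg hnext hcyc]
    exact iterate_minimalPeriod
  induction q with
  | zero => simp [rotorSent]
  | succ q ih =>
    rw [Nat.mul_succ, Nat.add_comm, rotorSent_add, rotorSent_outdeg hnext hcyc, hperiod, ih]
    ring

lemma rotorSent_eq_div_add_mod (hnext : ∀ e, tail (next e) = tail e)
    (hcyc : ∀ e e' : E, tail e = tail e' → ∃ k, next^[k] e = e') (e : E) (x : V) (n : ℕ) :
    rotorSent head next e x n = n / outdeg tail (tail e) * numEdges tail head (tail e) x +
      rotorSent head next e x (n % outdeg tail (tail e)) := by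
  set d := outdeg tail (tail e)
  have hperiods := rotorSent_outdeg_mul (head := head) hnext hcyc (next^[n % d] e) x (n / d)
  rw [tail_iterate hnext] at hperiods
  conv_lhs => rw [← Nat.mod_add_div n d]
  rw [rotorSent_add, hperiods, Nat.add_comm]

end RotorSent

section RotorRouting

variable {V E : Type} [DecidableEq V] {s : V} {tail head : E → V} {next : E → E}
  {hnext : ∀ e, tail (next e) = tail e}

lemma crFireList_rotor (l : List (Vne s)) (t : CRState tail s) (v : Vne s) :
    (crFireList tail head next hnext t l).2.1 v = next^[l.count v] (t.2.1 v) := by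
  induction l generalizing t with
  | nil => rfl
  | cons u l ih =>
    rw [crFireList, ih, List.count_cons]
    rcases eq_or_ne u v with rfl | h
    · simp [crFire]
    · have h' : (u : V) ≠ v := fun h' => h (Subtype.ext h')
      simp [crFire, h', Function.update_of_ne h.symm]

variable [Fintype V]

lemma crFireList_chips {t : CRState tail s} {l : List (Vne s)}
    (hl : crLegal tail head next hnext t l) (v : Vne s) :
    (crFireList tail head next hnext t l).1 v + l.count v =
      t.1 v + ∑ w, rotorSent head next (t.2.1 w) v.1 (l.count w) := by
  induction l generalizing t with
  | nil => simp only [crFireList, List.count_nil, rotorSent, Nat.count_zero, sum_const_zero]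
  | cons u l ih =>
    obtain ⟨hu, hl⟩ := hl
    have hu : 1 ≤ t.1 u := hu
    have hsent w : rotorSent head next (t.2.1 w) v.1 ((u :: l).count w) =
        rotorSent head next ((crFire tail head next hnext t u).2.1 w) v.1 (l.count w) +
          if w = u then (if v.1 = head (next (t.2.1 u)) then 1 else 0) else 0 := by
      rcases eq_or_ne w u with rfl | h
      · simp [crFire, rotorSent_succ, eq_comm]
      · simp [crFire, h, Ne.symm h]
    have hchips : (crFire tail head next hnext t u).1 v =
        (t.1 v - if v = u then 1 else 0) + if v.1 = head (next (t.2.1 u)) then 1 else 0 := rfl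
    have := ih hl
    rw [hchips] at this
    rw [crFireList, sum_congr rfl fun w _ => hsent w, sum_add_distrib, sum_ite_eq',
      if_pos (mem_univ u)]
    simp only [List.count_cons, beq_iff_eq, @eq_comm _ u v]
    split_ifs at this ⊢ <;> subst_vars <;> omega

end RotorRouting

section ChipsFromFirings

variable {V E : Type} [Fintype V] [DecidableEq V] {s : V} {tail : E → V}

/-- The chip configuration that is used up exactly when, starting from the rotors `ρ`, every
vertex `v` fires `n v` times: `v` emits `n v` chips and receives the ones its neighbours send. -/
def chipsFromFirings (head : E → V) (next : E → E) (ρ : RotorConfig tail s) (n : Vne s → ℕ)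
    (v : Vne s) : ℤ :=
  n v - ∑ w, (rotorSent head next (ρ.1 w) v.1 (n w) : ℤ)

lemma RoutesAll.exists_firingCounts {head : E → V} {next : E → E}
    {hnext : ∀ e, tail (next e) = tail e} {σ : Vne s → ℕ} {ρ τ : RotorConfig tail s}
    (h : RoutesAll tail head next hnext σ ρ τ) :
    ∃ n : Vne s → ℕ, (∀ v, τ.1 v = next^[n v] (ρ.1 v)) ∧
      ∀ v, (σ v : ℤ) = chipsFromFirings head next ρ n v := by
  obtain ⟨l, hl, hzero, rfl⟩ := h
  refine ⟨fun v => l.count v, crFireList_rotor l _, fun v => ?_⟩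
  have := crFireList_chips hl v
  rw [hzero, zero_add] at this
  rw [chipsFromFirings, eq_sub_iff_add_eq]
  exact_mod_cast this.symm

/-- Only the residues `n w % d_w` matter up to the Laplacian lattice, since every `d_w` firings
of `w` turn its rotor once around and send one chip along each outgoing edge. -/
lemma chipsFromFirings_eq_vecMul_laplacian_add [Fintype E] {head : E → V} {next : E → E}
    (hnext : ∀ e, tail (next e) = tail e)
    (hcyc : ∀ e e' : E, tail e = tail e' → ∃ k, next^[k] e = e')
    (ρ : RotorConfig tail s) (n : Vne s → ℕ) (v : Vne s) :
    chipsFromFirings head next ρ n v =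
      ((fun w => ((n w / outdeg tail w.1 : ℕ) : ℤ)) ᵥ* laplacian tail head) v +
        chipsFromFirings head next ρ (fun w => n w % outdeg tail w.1) v := by
  have hsent w : rotorSent head next (ρ.1 w) v.1 (n w) =
      n w / outdeg tail w.1 * numEdges tail head w.1 v.1 +
        rotorSent head next (ρ.1 w) v.1 (n w % outdeg tail w.1) := by
    simpa only [ρ.2 w] using rotorSent_eq_div_add_mod hnext hcyc (ρ.1 w) v.1 (n w)
  have hn := Nat.div_add_mod' (n v) (outdeg tail v.1)
  simp only [chipsFromFirings, vecMul_laplacian_apply, hsent]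
  push_cast [sum_add_distrib]
  zify at hn
  linarith

end ChipsFromFirings

theorem sandpile_action_free_general
    {V E : Type} [Fintype V] [DecidableEq V] [Fintype E]
    (tail head : E → V) (next : E → E)
    (hnext : ∀ e, tail (next e) = tail e)
    (hcyc : ∀ e e' : E, tail e = tail e' → ∃ k, next^[k] e = e')
    (s : V)
    (σ₁ σ₂ : Vne s → ℕ)
    (hσ₁ : Recurrent tail head σ₁) (hσ₂ : Recurrent tail head σ₂)
    (ρ : RotorConfig tail s)
    (τ : RotorConfig tail s)
    (h₁ : RoutesAll tail head next hnext σ₁ ρ τ)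
    (h₂ : RoutesAll tail head next hnext σ₂ ρ τ) :
    σ₁ = σ₂ := by
  obtain ⟨n₁, hτ₁, hchips₁⟩ := h₁.exists_firingCounts
  obtain ⟨n₂, hτ₂, hchips₂⟩ := h₂.exists_firingCounts
  have hmod : (fun w => n₁ w % outdeg tail w.1) = fun w => n₂ w % outdeg tail w.1 := by
    funext w
    simpa only [ρ.2 w] using mod_outdeg_eq_of_iterate_eq hnext hcyc ((hτ₁ w).symm.trans (hτ₂ w))
  refine eq_of_recurrent_of_vecMul_laplacian hσ₁ hσ₂
    (c := (fun w => ((n₁ w / outdeg tail w.1 : ℕ) : ℤ)) -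
      fun w => ((n₂ w / outdeg tail w.1 : ℕ) : ℤ)) fun v => ?_
  rw [hchips₁, hchips₂, chipsFromFirings_eq_vecMul_laplacian_add hnext hcyc ρ n₁,
    chipsFromFirings_eq_vecMul_laplacian_add hnext hcyc ρ n₂, hmod, sub_vecMul, Pi.sub_apply]
  ring

/-- **Freeness of the sandpile action.**  Let `G` be a digraph with a global sink and
let `σ₁`, `σ₂` be recurrent chip configurations.  If there is an acyclic rotor
configuration `ρ` such that `σ₁(ρ) = σ₂(ρ)`, then `σ₁ = σ₂`. -/
theorem sandpile_action_free
    {V E : Type} [Fintype V] [DecidableEq V] [Fintype E]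
    (tail head : E → V) (next : E → E)
    (hnext : ∀ e, tail (next e) = tail e)
    (hcyc : ∀ e e' : E, tail e = tail e' → ∃ k, next^[k] e = e')
    (s : V) (hs : outdeg tail s = 0)
    (hglobal : ∀ v : V,
      Relation.ReflTransGen (fun a b => ∃ e, tail e = a ∧ head e = b) v s)
    (σ₁ σ₂ : Vne s → ℕ)
    (hσ₁ : Recurrent tail head σ₁) (hσ₂ : Recurrent tail head σ₂)
    (ρ : RotorConfig tail s) (hρ : RAcyclic tail head s ρ)
    (τ : RotorConfig tail s)
    (h₁ : RoutesAll tail head next hnext σ₁ ρ τ)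
    (h₂ : RoutesAll tail head next hnext σ₂ ρ τ) :
    σ₁ = σ₂ :=
  sandpile_action_free_general tail head next hnext hcyc s σ₁ σ₂ hσ₁ hσ₂ ρ τ h₁ h₂
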